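/- Let f be L-smooth, satisfy the PL condition with parameter μ and minimum f*, and suppose f_i satisfies the restricted heterogeneity bound ||(∇f(x)−∇f_i(x)) − (∇f(π(x))−∇f_i(π(x)))|| ≤ δ||x − π(x)|| with ∇f_i vanishing on minimizers of f, where π(x) is the projection onto the minimizer set. Then for x⁺ = x − η∇f_i(x) with 0 < η ≤ 1/L and δ < μ, f(x⁺) − f* ≤ (1 − ημζ/2)(f(x) − f*) − (ηζ/4)||∇f(x)||², where ζ = 1 − δ²/μ². -/

import Mathlib

set_option maxHeartbeats 1000000

open RealInnerProductSpace


open RealInnerProductSpace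


lemma myInnerGrad {d : ℕ} (f : EuclideanSpace ℝ (Fin d) → ℝ) (z v : EuclideanSpace ℝ (Fin d)) :
    ⟪gradient f z, v⟫ = fderiv ℝ f z v := by
  rw [gradient, ← InnerProductSpace.toDual_apply_apply, LinearIsometryEquiv.apply_symm_apply]

lemma myDescent {d : ℕ} (f : EuclideanSpace ℝ (Fin d) → ℝ) (L : ℝ) (hL : 0 < L)
    (hdf : Differentiable ℝ f)
    (hsmooth : LipschitzWith (Real.toNNReal L) (gradient f)) (x y : EuclideanSpace ℝ (Fin d)) :
    f y ≤ f x + ⟪gradient f x, y - x⟫ + L / 2 * ‖y - x‖ ^ 2 := by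
  set v := y - x with hv
  set φ : ℝ → ℝ := fun t => f (x + t • v) - t * ⟪gradient f x, v⟫ - L / 2 * ‖v‖ ^ 2 * t ^ 2
    with hφ
  have hline : ∀ t : ℝ, HasDerivAt (fun t : ℝ => x + t • v) v t := fun t =>
    by simpa using ((hasDerivAt_id t).smul_const v).const_add x
  have hder : ∀ t : ℝ, HasDerivAt φ
      (⟪gradient f (x + t • v), v⟫ - ⟪gradient f x, v⟫ - L * ‖v‖ ^ 2 * t) t := by
    intro t
    have h1 : HasDerivAt (fun t : ℝ => f (x + t • v)) (fderiv ℝ f (x + t • v) v) t :=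
      (hdf (x + t • v)).hasFDerivAt.comp_hasDerivAt t (hline t)
    have h2 : HasDerivAt (fun t : ℝ => t * ⟪gradient f x, v⟫) ⟪gradient f x, v⟫ t := by
      simpa using (hasDerivAt_id t).mul_const ⟪gradient f x, v⟫
    have h3 : HasDerivAt (fun t : ℝ => L / 2 * ‖v‖ ^ 2 * t ^ 2) (L * ‖v‖ ^ 2 * t) t := by
      have := (hasDerivAt_pow 2 t).const_mul (L / 2 * ‖v‖ ^ 2)
      exact this.congr_deriv (by ring)
    have := (h1.sub h2).sub h3
    rw [myInnerGrad]
    exact this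
  have hderiv_nonpos : ∀ t ∈ Set.Ioo (0:ℝ) 1, deriv φ t ≤ 0 := by
    intro t ht
    rw [(hder t).deriv]
    have hlip : ‖gradient f (x + t • v) - gradient f x‖ ≤ L * (t * ‖v‖) := by
      have := hsmooth.dist_le_mul (x + t • v) x
      rw [dist_eq_norm, dist_eq_norm] at this
      simpa [norm_smul, abs_of_pos ht.1, Real.coe_toNNReal L hL.le, mul_assoc] using this
    have hinner : ⟪gradient f (x + t • v) - gradient f x, v⟫ ≤ L * (t * ‖v‖) * ‖v‖ :=
      le_trans (real_inner_le_norm _ _)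
        (mul_le_mul_of_nonneg_right hlip (norm_nonneg v))
    rw [inner_sub_left] at hinner
    nlinarith [hinner]
  have hmono : AntitoneOn φ (Set.Icc (0:ℝ) 1) := by
    refine antitoneOn_of_deriv_nonpos (convex_Icc 0 1) ?_ ?_ ?_
    · exact fun t _ => (hder t).differentiableAt.continuousAt.continuousWithinAt
    · intro t ht
      rw [interior_Icc] at ht
      exact (hder t).differentiableAt.differentiableWithinAt
    · intro t ht
      rw [interior_Icc] at ht
      exact hderiv_nonpos t ht
  have h01 := hmono (Set.left_mem_Icc.mpr zero_le_one) (Set.right_mem_Icc.mpr zero_le_one)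
    zero_le_one
  have h0 : φ 0 = f x := by simp [hφ]
  have h1 : φ 1 = f y - ⟪gradient f x, v⟫ - L / 2 * ‖v‖ ^ 2 := by
    simp [hφ, hv]
  rw [h0, h1] at h01
  linarith


open RealInnerProductSpace



noncomputable def gdSeq {d : ℕ} (f : EuclideanSpace ℝ (Fin d) → ℝ) (s : ℝ)
    (x : EuclideanSpace ℝ (Fin d)) : ℕ → EuclideanSpace ℝ (Fin d)
  | 0 => x
  | n + 1 => gdSeq f s x n - s • gradient f (gdSeq f s x n)

lemma myEB {d : ℕ} (f : EuclideanSpace ℝ (Fin d) → ℝ) (L μ fstar : ℝ)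
    (hL : 0 < L) (hμ : 0 < μ) (hdf : Differentiable ℝ f)
    (hsmooth : LipschitzWith (Real.toNNReal L) (gradient f))
    (hmin : ∀ x, fstar ≤ f x)
    (hPL : ∀ x, 2 * μ * (f x - fstar) ≤ ‖gradient f x‖ ^ 2)
    (hf0 : ∀ x, f x = fstar → gradient f x = 0)
    (x : EuclideanSpace ℝ (Fin d)) :
    μ * Metric.infDist x {y | f y = fstar} ≤ ‖gradient f x‖ := by
  set D := Metric.infDist x {y | f y = fstar} with hD
  have hD0 : 0 ≤ D := Metric.infDist_nonneg
  set sm := Real.sqrt (μ / 2) with hsm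
  have hsm0 : 0 < sm := Real.sqrt_pos.mpr (by linarith)
  have hsmsq : sm ^ 2 = μ / 2 := Real.sq_sqrt (by linarith)
  clear_value sm
  -- key: for all small s, D * ((1 - L*s/2) * sm) ≤ sqrt (f x - fstar)
  have key : ∀ s : ℝ, 0 < s → s ≤ 1 / L → s ≤ 1 / (2 * μ) →
      D * ((1 - L * s / 2) * sm) ≤ Real.sqrt (f x - fstar) := by
    intro s hs hsL hsμ
    have hLs : L * s ≤ 1 := by
      have := (le_div_iff₀ hL).mp hsL; linarith
    have hμs : 2 * μ * s ≤ 1 := by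
      have := (le_div_iff₀ (by linarith : (0:ℝ) < 2 * μ)).mp hsμ; linarith
    set c : ℝ := 1 - L * s / 2 with hc
    have hc0 : (1:ℝ)/2 ≤ c := by rw [hc]; linarith
    clear_value c
    have hcpos : 0 < c := by linarith
    set X : ℕ → EuclideanSpace ℝ (Fin d) := gdSeq f s x with hXdef
    set e : ℕ → ℝ := fun n => f (X n) - fstar with hedef
    have hX0 : X 0 = x := rfl
    have hXs : ∀ n, X (n + 1) = X n - s • gradient f (X n) := fun n => rfl
    have he' : ∀ n, e n = f (X n) - fstar := fun n => rfl
    clear_value X e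
    have he0 : ∀ n, 0 ≤ e n := fun n => by rw [he' n]; linarith [hmin (X n)]
    -- per-step descent
    have step1 : ∀ n, e (n + 1) ≤ e n - s * c * ‖gradient f (X n)‖ ^ 2 := by
      intro n
      have hd := myDescent f L hL hdf hsmooth (X n) (X (n + 1))
      rw [hXs n] at hd
      have hsub : X n - s • gradient f (X n) - X n = -(s • gradient f (X n)) := by abel
      rw [hsub] at hd
      have hin : ⟪gradient f (X n), -(s • gradient f (X n))⟫
          = -(s * ‖gradient f (X n)‖ ^ 2) := by
        rw [inner_neg_right, real_inner_smul_right, real_inner_self_eq_norm_sq]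
        all_goals ring
      have hnrm : ‖-(s • gradient f (X n))‖ ^ 2 = s ^ 2 * ‖gradient f (X n)‖ ^ 2 := by
        rw [norm_neg, norm_smul, Real.norm_eq_abs, abs_of_pos hs, mul_pow]
      rw [hin, hnrm] at hd
      rw [he' (n+1), he' n, hXs n, hc]
      nlinarith [hd]
    -- geometric decay
    have step2 : ∀ n, e (n + 1) ≤ (1 - μ * s) * e n := by
      intro n
      have h1 := step1 n
      have h2 : 2 * μ * e n ≤ ‖gradient f (X n)‖ ^ 2 := by
        rw [he' n]; exact hPL (X n)
      nlinarith [mul_le_mul_of_nonneg_left h2 (mul_nonneg hs.le hcpos.le),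
        mul_nonneg (mul_nonneg hμ.le (mul_nonneg hs.le (he0 n)))
          (by linarith : (0:ℝ) ≤ 2 * c - 1)]
    have hq0 : 0 ≤ 1 - μ * s := by linarith
    have hq1 : 1 - μ * s < 1 := by nlinarith
    -- per-step path length bound
    have step4 : ∀ n, c * sm * dist (X n) (X (n + 1)) ≤
        Real.sqrt (e n) - Real.sqrt (e (n + 1)) := by
      intro n
      have hdist : dist (X n) (X (n + 1)) = s * ‖gradient f (X n)‖ := by
        rw [hXs n, dist_eq_norm, sub_sub_cancel, norm_smul, Real.norm_eq_abs,
          abs_of_pos hs]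
      rw [hdist]
      rcases eq_or_lt_of_le (he0 n) with h0 | hpos
      · have hfn : f (X n) = fstar := by have := he' n; linarith [h0.symm ▸ this]
        have hg0 : gradient f (X n) = 0 := hf0 (X n) hfn
        have hen1 : e (n + 1) = 0 := by
          have h2 := step2 n
          have h3 := he0 (n + 1)
          nlinarith [h2, h3, he0 n]
        rw [hg0, hen1, ← h0]
        simp
      · set G := ‖gradient f (X n)‖ with hG
        have hG0 : 0 ≤ G := norm_nonneg _
        set sa := Real.sqrt (e n) with hsa
        set sb := Real.sqrt (e (n + 1)) with hsb
        have hsa0 : 0 < sa := Real.sqrt_pos.mpr hpos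
        have hsb0 : 0 ≤ sb := Real.sqrt_nonneg _
        have hsaa : sa ^ 2 = e n := Real.sq_sqrt hpos.le
        have hsbb : sb ^ 2 = e (n + 1) := Real.sq_sqrt (he0 (n + 1))
        have hble : e (n + 1) ≤ e n := by
          nlinarith [step1 n, mul_nonneg (mul_nonneg hs.le hcpos.le) (sq_nonneg G)]
        have hsab : sb ≤ sa := Real.sqrt_le_sqrt hble
        clear_value sa sb G
        have hba : sb ^ 2 ≤ sa ^ 2 - s * c * G ^ 2 := by
          rw [hsaa, hsbb, hG]; exact step1 n
        have hGsq : 2 * μ * sa ^ 2 ≤ G ^ 2 := by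
          rw [hsaa, he' n, hG]; exact hPL (X n)
        have hGlb : 2 * sm * sa ≤ G := by
          nlinarith [sq_nonneg (G - 2 * sm * sa), sq_nonneg (G + 2 * sm * sa),
            mul_pos hsm0 hsa0, hG0]
        have h1 : s * c * G * (2 * sm * sa) ≤ s * c * G * G :=
          mul_le_mul_of_nonneg_left hGlb (by positivity)
        have e1 : s * c * G ^ 2 ≤ 2 * sa * (sa - sb) := by
          nlinarith [sq_nonneg (sa - sb), hba]
        have e3 : 2 * sa * (c * sm * (s * G)) ≤ 2 * sa * (sa - sb) := by
          nlinarith [e1, h1]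
        exact le_of_mul_le_mul_left e3 (by positivity)
    -- cumulative path length
    have step5 : ∀ n, c * sm * dist (X 0) (X n) ≤ Real.sqrt (e 0) - Real.sqrt (e n) := by
      intro n
      induction n with
      | zero => simp
      | succ n ih =>
        have htri : dist (X 0) (X (n + 1)) ≤ dist (X 0) (X n) + dist (X n) (X (n + 1)) :=
          dist_triangle _ _ _
        have h4 := step4 n
        nlinarith [mul_le_mul_of_nonneg_left htri
          (by positivity : (0:ℝ) ≤ c * sm)]
    -- sqrt e decays geometrically
    have step3 : ∀ n, Real.sqrt (e n) ≤ Real.sqrt (e 0) * Real.sqrt (1 - μ * s) ^ n := by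
      intro n
      induction n with
      | zero => simp
      | succ n ih =>
        calc Real.sqrt (e (n + 1)) ≤ Real.sqrt ((1 - μ * s) * e n) :=
              Real.sqrt_le_sqrt (step2 n)
          _ = Real.sqrt (1 - μ * s) * Real.sqrt (e n) := Real.sqrt_mul hq0 _
          _ ≤ Real.sqrt (1 - μ * s) * (Real.sqrt (e 0) * Real.sqrt (1 - μ * s) ^ n) :=
              mul_le_mul_of_nonneg_left ih (Real.sqrt_nonneg _)
          _ = Real.sqrt (e 0) * Real.sqrt (1 - μ * s) ^ (n + 1) := by ring
    -- Cauchy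
    have hcauchy : CauchySeq X := by
      apply cauchySeq_of_le_geometric (Real.sqrt (1 - μ * s))
        (Real.sqrt (e 0) / (c * sm))
      · calc Real.sqrt (1 - μ * s) < Real.sqrt 1 := Real.sqrt_lt_sqrt hq0 hq1
          _ = 1 := Real.sqrt_one
      · intro n
        have hpos : 0 < c * sm := by positivity
        rw [div_mul_eq_mul_div, le_div_iff₀ hpos]
        calc dist (X n) (X (n + 1)) * (c * sm)
            ≤ Real.sqrt (e n) - Real.sqrt (e (n + 1)) := by linarith [step4 n]
          _ ≤ Real.sqrt (e n) := by linarith [Real.sqrt_nonneg (e (n + 1))]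
          _ ≤ Real.sqrt (e 0) * Real.sqrt (1 - μ * s) ^ n := step3 n
    obtain ⟨y, hy⟩ := cauchySeq_tendsto_of_complete hcauchy
    -- y is a minimizer
    have hen_to : Filter.Tendsto e Filter.atTop (nhds 0) := by
      have hgeo : ∀ n, e n ≤ (1 - μ * s) ^ n * e 0 := by
        intro n
        induction n with
        | zero => simp
        | succ n ih =>
          calc e (n + 1) ≤ (1 - μ * s) * e n := step2 n
            _ ≤ (1 - μ * s) * ((1 - μ * s) ^ n * e 0) :=
                mul_le_mul_of_nonneg_left ih hq0
            _ = (1 - μ * s) ^ (n + 1) * e 0 := by ring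
      have hlim : Filter.Tendsto (fun n => (1 - μ * s) ^ n * e 0) Filter.atTop (nhds 0) := by
        rw [show (0:ℝ) = 0 * e 0 by ring]
        exact (tendsto_pow_atTop_nhds_zero_of_lt_one hq0 hq1).mul_const _
      exact squeeze_zero he0 hgeo hlim
    have hfy : f y = fstar := by
      have h1 : Filter.Tendsto (fun n => f (X n)) Filter.atTop (nhds (f y)) :=
        (hdf.continuous.tendsto y).comp hy
      have h2 : Filter.Tendsto (fun n => f (X n)) Filter.atTop (nhds fstar) := by
        have heq : (fun n => f (X n)) = fun n => e n + fstar := by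
          funext n; rw [he' n]; ring
        have h3 := hen_to.add_const fstar
        rw [zero_add] at h3
        rw [heq]
        exact h3
      exact tendsto_nhds_unique h1 h2
    -- conclude
    have hdxy : c * sm * dist x y ≤ Real.sqrt (e 0) := by
      have h1 : Filter.Tendsto (fun n => c * sm * dist x (X n)) Filter.atTop
          (nhds (c * sm * dist x y)) :=
        (tendsto_const_nhds.dist hy).const_mul (c * sm)
      refine le_of_tendsto h1 (Filter.Eventually.of_forall fun n => ?_)
      have h5 := step5 n
      rw [hX0] at h5
      calc c * sm * dist x (X n) ≤ Real.sqrt (e 0) - Real.sqrt (e n) := h5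
        _ ≤ Real.sqrt (e 0) := by linarith [Real.sqrt_nonneg (e n)]
    have hDle : D ≤ dist x y := by
      rw [hD]; exact Metric.infDist_le_dist_of_mem hfy
    have he00 : e 0 = f x - fstar := by rw [he' 0, hX0]
    calc D * (c * sm)
        ≤ dist x y * (c * sm) := mul_le_mul_of_nonneg_right hDle (by positivity)
      _ = c * sm * dist x y := by ring
      _ ≤ Real.sqrt (e 0) := hdxy
      _ = Real.sqrt (f x - fstar) := by rw [he00]
  clear_value D
  -- let s → 0 : D * sm ≤ sqrt (f x - fstar)
  have hDsm : D * sm ≤ Real.sqrt (f x - fstar) := by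
    refine le_of_forall_pos_le_add fun ε hε => ?_
    have hA : 0 ≤ D * sm := mul_nonneg hD0 hsm0.le
    have hden : 0 < L * (D * sm + 1) := mul_pos hL (by linarith)
    set s : ℝ := min (min (1 / L) (1 / (2 * μ))) (2 * ε / (L * (D * sm + 1))) with hs
    have hs0 : 0 < s :=
      lt_min (lt_min (by positivity) (by positivity)) (div_pos (by linarith) hden)
    have h1 := key s hs0 (le_trans (min_le_left _ _) (min_le_left _ _))
      (le_trans (min_le_left _ _) (min_le_right _ _))
    have hs2 : s ≤ 2 * ε / (L * (D * sm + 1)) := min_le_right _ _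
    have hfrac : D * sm * (L * s / 2) ≤ ε := by
      have h3 : D * sm * (L / 2) * s ≤ D * sm * (L / 2) * (2 * ε / (L * (D * sm + 1))) :=
        mul_le_mul_of_nonneg_left hs2 (by positivity)
      have h4 : D * sm * (L / 2) * (2 * ε / (L * (D * sm + 1))) = D * sm * ε / (D * sm + 1) := by
        field_simp
      have h5 : D * sm * ε / (D * sm + 1) ≤ ε := by
        rw [div_le_iff₀ (by linarith : (0:ℝ) < D * sm + 1)]
        nlinarith
      nlinarith [h3, h4 ▸ h3]
    nlinarith [h1, hD0, hsm0.le, hfrac]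
  -- finish
  have h2μ : (0:ℝ) ≤ 2 * μ := by linarith
  have hfin : Real.sqrt (2 * μ) * (D * sm) ≤ Real.sqrt (2 * μ) * Real.sqrt (f x - fstar) :=
    mul_le_mul_of_nonneg_left hDsm (Real.sqrt_nonneg _)
  have hleft : Real.sqrt (2 * μ) * sm = μ := by
    rw [hsm, ← Real.sqrt_mul h2μ]
    rw [show 2 * μ * (μ / 2) = μ ^ 2 by ring, Real.sqrt_sq hμ.le]
  have hright : Real.sqrt (2 * μ) * Real.sqrt (f x - fstar) ≤ ‖gradient f x‖ := by
    rw [← Real.sqrt_mul h2μ]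
    calc Real.sqrt (2 * μ * (f x - fstar)) ≤ Real.sqrt (‖gradient f x‖ ^ 2) :=
          Real.sqrt_le_sqrt (hPL x)
      _ = ‖gradient f x‖ := Real.sqrt_sq (norm_nonneg _)
  calc μ * D = Real.sqrt (2 * μ) * sm * D := by rw [hleft]
    _ = Real.sqrt (2 * μ) * (D * sm) := by ring
    _ ≤ Real.sqrt (2 * μ) * Real.sqrt (f x - fstar) := hfin
    _ ≤ ‖gradient f x‖ := hright


theorem stmt18 {d : ℕ} (f fi : EuclideanSpace ℝ (Fin d) → ℝ)
    (L μ δ fstar ζ η : ℝ)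
    (hL : 0 < L) (hμ : 0 < μ) (hδ : 0 ≤ δ) (hδμ : δ < μ)
    (hdf : Differentiable ℝ f) (hdfi : Differentiable ℝ fi)
    (hsmooth : LipschitzWith (Real.toNNReal L) (gradient f))
    (Xstar : Set (EuclideanSpace ℝ (Fin d)))
    (hXstar : Xstar = {x | f x = fstar})
    (hmin : ∀ x, fstar ≤ f x)
    (hne : Xstar.Nonempty) (hclosed : IsClosed Xstar)
    (hPL : ∀ x, 2 * μ * (f x - fstar) ≤ ‖gradient f x‖ ^ 2)
    (hfi0 : ∀ x ∈ Xstar, gradient fi x = 0)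
    (hf0 : ∀ x ∈ Xstar, gradient f x = 0)
    (π : EuclideanSpace ℝ (Fin d) → EuclideanSpace ℝ (Fin d))
    (hπmem : ∀ x, π x ∈ Xstar)
    (hπdist : ∀ x, ‖x - π x‖ = Metric.infDist x Xstar)
    (hhet : ∀ x, ‖(gradient f x - gradient fi x)
        - (gradient f (π x) - gradient fi (π x))‖ ≤ δ * ‖x - π x‖)
    (hζ : ζ = 1 - δ ^ 2 / μ ^ 2)
    (hη : 0 < η) (hηL : η ≤ 1 / L) :
    ∀ x : EuclideanSpace ℝ (Fin d),
      f (x - η • gradient fi x) - fstar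
        ≤ (1 - η * μ * ζ / 2) * (f x - fstar) - η * ζ / 4 * ‖gradient f x‖ ^ 2 := by
  subst hXstar
  intro x
  have hf0' : ∀ z : EuclideanSpace ℝ (Fin d), f z = fstar → gradient f z = 0 :=
    fun z hz => hf0 z hz
  have hEB : μ * ‖x - π x‖ ≤ ‖gradient f x‖ := by
    rw [hπdist x]
    exact myEB f L μ fstar hL hμ hdf hsmooth hmin hPL hf0' x
  have hζ0 : 0 ≤ ζ := by
    rw [hζ, sub_nonneg, div_le_one (by positivity)]
    nlinarith
  have hdiffb : ‖gradient f x - gradient fi x‖ ≤ δ * ‖x - π x‖ := by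
    have h := hhet x
    rw [hf0 (π x) (hπmem x), hfi0 (π x) (hπmem x)] at h
    simpa using h
  have hsq : μ ^ 2 * ‖gradient f x - gradient fi x‖ ^ 2 ≤ δ ^ 2 * ‖gradient f x‖ ^ 2 := by
    have h1 : μ * ‖gradient f x - gradient fi x‖ ≤ δ * ‖gradient f x‖ := by
      nlinarith [norm_nonneg (x - π x), norm_nonneg (gradient f x - gradient fi x)]
    nlinarith [mul_le_mul h1 h1 (by positivity) (by positivity)]
  have hM : ‖gradient f x - gradient fi x‖ ^ 2 ≤ (1 - ζ) * ‖gradient f x‖ ^ 2 := by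
    rw [hζ]
    have hμ2 : (0:ℝ) < μ ^ 2 := by positivity
    rw [show (1 - (1 - δ ^ 2 / μ ^ 2)) = δ ^ 2 / μ ^ 2 by ring, div_mul_eq_mul_div,
      le_div_iff₀ hμ2]
    nlinarith [hsq]
  -- descent lemma
  have hd := myDescent f L hL hdf hsmooth x (x - η • gradient fi x)
  have hsub : x - η • gradient fi x - x = -(η • gradient fi x) := by abel
  rw [hsub] at hd
  have hin : ⟪gradient f x, -(η • gradient fi x)⟫
      = -(η * ⟪gradient f x, gradient fi x⟫) := by
    rw [inner_neg_right, real_inner_smul_right]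
  have hnrm : ‖-(η • gradient fi x)‖ ^ 2 = η ^ 2 * ‖gradient fi x‖ ^ 2 := by
    rw [norm_neg, norm_smul, Real.norm_eq_abs, abs_of_pos hη, mul_pow]
  rw [hin, hnrm] at hd
  have hexp : ‖gradient f x - gradient fi x‖ ^ 2
      = ‖gradient f x‖ ^ 2 - 2 * ⟪gradient f x, gradient fi x⟫ + ‖gradient fi x‖ ^ 2 :=
    norm_sub_sq_real _ _
  have hLη : L * η ≤ 1 := by
    have := (le_div_iff₀ hL).mp hηL; linarith
  have hηN : L / 2 * η ^ 2 * ‖gradient fi x‖ ^ 2 ≤ η / 2 * ‖gradient fi x‖ ^ 2 := by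
    nlinarith [sq_nonneg ‖gradient fi x‖, mul_nonneg hη.le (sq_nonneg ‖gradient fi x‖)]
  have hstep : f (x - η • gradient fi x) ≤ f x - η * ζ / 2 * ‖gradient f x‖ ^ 2 := by
    nlinarith [hd, hηN, hexp, hM, mul_le_mul_of_nonneg_left hM (by positivity : (0:ℝ) ≤ η / 2)]
  have hPLx := hPL x
  nlinarith [hstep, mul_nonneg (mul_nonneg hη.le hζ0)
    (by linarith [hPL x] : (0:ℝ) ≤ ‖gradient f x‖ ^ 2 - 2 * μ * (f x - fstar))]
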